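/- arXiv:1809.03042 — 2 statements merged into one kernel-verified Lean document; each statement's English description precedes it below -/
import Mathlib

section
/- The infimum defining the generalized Wasserstein distance is unchanged under the additional constraint that the competitors are sub-measures: for all $\mu,\nu \in \mathcal{M}(\mathbb{R}^d)$, $W^g(\mu,\nu) = \inf\{|\mu-\tilde\mu| + |\nu-\tilde\nu| + W(\tilde\mu,\tilde\nu) : \tilde\mu \le \mu,\ \tilde\nu \le \nu,\ |\tilde\mu| = |\tilde\nu|\}$, where $\tilde\mu \le \mu$ means $\tilde\mu(A) \le \mu(A)$ for every Borel set $A$. -/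
open MeasureTheory Set Metric Filter

noncomputable section

/-- Euclidean space `ℝ^n`. -/
abbrev Euc (n : ℕ) : Type := EuclideanSpace ℝ (Fin n)

/-- The tangent bundle `Tℝ^n ≅ ℝ^n × ℝ^n`, with projection `Prod.fst`. -/
abbrev TEuc (n : ℕ) : Type := Euc n × Euc n

/-- The support of a measure: points all of whose neighborhoods have positive measure. -/
def msupp {X : Type} [TopologicalSpace X] [MeasurableSpace X] (μ : Measure X) : Set X :=
  {x | ∀ U ∈ nhds x, μ U ≠ 0}

/-- The total mass `|μ|` of a measure, as a real number. -/
def mass {X : Type} [MeasurableSpace X] (μ : Measure X) : ℝ := (μ Set.univ).toReal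

/-- `μ ∈ 𝓜`: a positive Borel measure with finite mass and bounded support. -/
def GoodMeasure {X : Type} [PseudoMetricSpace X] [MeasurableSpace X] (μ : Measure X) : Prop :=
  μ Set.univ ≠ ⊤ ∧ Bornology.IsBounded (msupp μ)

/-- The total variation norm `|μ - ν|` of the difference of two (finite) positive measures. -/
def tv {X : Type} [MeasurableSpace X] (μ ν : Measure X) : ℝ :=
  mass μ + mass ν - 2 * mass (μ ⊓ ν)

/-- Transference plans between two measures: measures on the product with the
given marginals. -/
def plans {X Y : Type} [MeasurableSpace X] [MeasurableSpace Y] (μ : Measure X) (ν : Measure Y) :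
    Set (Measure (X × Y)) :=
  {π | π.map Prod.fst = μ ∧ π.map Prod.snd = ν}

/-- The `1`-Wasserstein distance `W(μ,ν)` (for measures of equal mass;
junk value otherwise). -/
def Wass {X : Type} [PseudoMetricSpace X] [MeasurableSpace X] (μ ν : Measure X) : ℝ :=
  sInf {r : ℝ | ∃ π ∈ plans μ ν, r = ∫ q, dist q.1 q.2 ∂π}

/-- The set `P^opt(μ,ν)` of optimal transference plans: plans realizing `W(μ,ν)`. -/
def OptPlans {X : Type} [PseudoMetricSpace X] [MeasurableSpace X] (μ ν : Measure X) :
    Set (Measure (X × X)) :=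
  {π | π ∈ plans μ ν ∧ ∫ q, dist q.1 q.2 ∂π = Wass μ ν}

/-- The generalized Wasserstein distance `W^g(μ,ν)` (with parameters `a = b = 1`, `p = 1`). -/
def GWass {X : Type} [PseudoMetricSpace X] [MeasurableSpace X] (μ ν : Measure X) : ℝ :=
  sInf {r : ℝ | ∃ μ' ν' : Measure X, GoodMeasure μ' ∧ GoodMeasure ν' ∧ mass μ' = mass ν' ∧
    r = tv μ μ' + tv ν ν' + Wass μ' ν'}

/-- The `p`-Wasserstein distance `W_p(μ,ν) = |μ| (min ∫ d(x,y)^p dπ)^{1/p}`, the minimum over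
probability plans between the normalized measures `μ/|μ|` and `ν/|ν|`. -/
def WassP {X : Type} [PseudoMetricSpace X] [MeasurableSpace X] (p : ℝ) (μ ν : Measure X) : ℝ :=
  sInf {r : ℝ | ∃ π : Measure (X × X), IsProbabilityMeasure π ∧
    π.map Prod.fst = (ENNReal.ofReal (mass μ))⁻¹ • μ ∧
    π.map Prod.snd = (ENNReal.ofReal (mass ν))⁻¹ • ν ∧
    r = mass μ * (∫ q, dist q.1 q.2 ^ p ∂π) ^ (1 / p)}

/-- Test functions: smooth and compactly supported. -/
def TestFun {n : ℕ} (f : Euc n → ℝ) : Prop := ContDiff ℝ (⊤ : ℕ∞) f ∧ HasCompactSupport f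

/-- A Probability Vector Field: `V : 𝓜(ℝ^n) → 𝓜(Tℝ^n)` with `π₁#V[μ] = μ`. -/
def IsPVF {n : ℕ} (V : Measure (Euc n) → Measure (TEuc n)) : Prop :=
  ∀ μ : Measure (Euc n), GoodMeasure μ → GoodMeasure (V μ) ∧ (V μ).map Prod.fst = μ

/-- The operator `𝒲(V₁,V₂)`: infimum of the fiber cost over plans between `V₁` and `V₂`
whose projection on the base is an optimal plan. -/
def calW {n : ℕ} (V₁ V₂ : Measure (TEuc n)) : ℝ :=
  sInf {r : ℝ | ∃ p : Measure (TEuc n × TEuc n), p ∈ plans V₁ V₂ ∧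
    p.map (fun q => (q.1.1, q.2.1)) ∈ OptPlans (V₁.map Prod.fst) (V₂.map Prod.fst) ∧
    r = ∫ q, ‖q.1.2 - q.2.2‖ ∂p}

/-- The operator `𝒲^g(V₁,V₂)`: infimum of the fiber cost over sub-PVFs `Ṽᵢ ≤ Vᵢ` whose base
projections realize `W^g(π₁#V₁, π₁#V₂)`, and plans between them projecting to an optimal plan. -/
def calWg {n : ℕ} (V₁ V₂ : Measure (TEuc n)) : ℝ :=
  sInf {r : ℝ | ∃ (W₁ W₂ : Measure (TEuc n)) (p : Measure (TEuc n × TEuc n)),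
    W₁ ≤ V₁ ∧ W₂ ≤ V₂ ∧ p ∈ plans W₁ W₂ ∧
    GWass (V₁.map Prod.fst) (V₂.map Prod.fst) =
      tv (V₁.map Prod.fst) (W₁.map Prod.fst) + Wass (W₁.map Prod.fst) (W₂.map Prod.fst) +
        tv (V₂.map Prod.fst) (W₂.map Prod.fst) ∧
    p.map (fun q => (q.1.1, q.2.1)) ∈ OptPlans (W₁.map Prod.fst) (W₂.map Prod.fst) ∧
    r = ∫ q, ‖q.1.2 - q.2.2‖ ∂p}

/-- Hypothesis (V1): support sublinearity,
`sup_{(x,v) ∈ supp V[μ]} |v| ≤ C (1 + sup_{x ∈ supp μ} |x|)`. -/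
def V1cond {n : ℕ} (V : Measure (Euc n) → Measure (TEuc n)) : Prop :=
  ∃ C : ℝ, 0 < C ∧ ∀ μ : Measure (Euc n), GoodMeasure μ → ∀ B : ℝ,
    (∀ x ∈ msupp μ, ‖x‖ ≤ B) → ∀ q ∈ msupp (V μ), ‖q.2‖ ≤ C * (1 + B)

/-- Continuity of a curve of measures with respect to `W^g`, on a set of times. -/
def WgContinuousOn {X : Type} [PseudoMetricSpace X] [MeasurableSpace X]
    (μ : ℝ → Measure X) (I : Set ℝ) : Prop :=
  ∀ t ∈ I, ∀ ε : ℝ, 0 < ε → ∃ δ > 0, ∀ t' ∈ I, |t' - t| < δ → GWass (μ t') (μ t) < ε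

/-- Weak solution of the Measure Differential Equation `μ̇ = V[μ]` on `[0,T]`. -/
def IsSolMDE {n : ℕ} (V : Measure (Euc n) → Measure (TEuc n)) (T : ℝ)
    (μ : ℝ → Measure (Euc n)) : Prop :=
  ∀ f : Euc n → ℝ, TestFun f →
    (∀ᵐ s ∂(volume.restrict (Set.Icc (0:ℝ) T)),
      Integrable (fun q : TEuc n => @inner ℝ _ _ (gradient f q.1) q.2) (V (μ s))) ∧
    IntegrableOn (fun s : ℝ =>
      ∫ q : TEuc n, @inner ℝ _ _ (gradient f q.1) q.2 ∂(V (μ s))) (Set.Icc (0:ℝ) T) ∧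
    ∀ t ∈ Set.Icc (0:ℝ) T,
      ∫ x, f x ∂(μ t) = (∫ x, f x ∂(μ 0)) +
        ∫ s in Set.Icc (0:ℝ) t, ∫ q : TEuc n, @inner ℝ _ _ (gradient f q.1) q.2 ∂(V (μ s))

/-- Weak solution of `μ̇ = s[μ]` on `[0,T]` with initial datum `μ₀`. -/
def IsSolSrc {n : ℕ} (s : Measure (Euc n) → Measure (Euc n)) (T : ℝ)
    (μ₀ : Measure (Euc n)) (μ : ℝ → Measure (Euc n)) : Prop :=
  μ 0 = μ₀ ∧ (∀ t ∈ Set.Icc (0:ℝ) T, GoodMeasure (μ t)) ∧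
  WgContinuousOn μ (Set.Icc (0:ℝ) T) ∧
  ∀ f : Euc n → ℝ, TestFun f →
    IntegrableOn (fun τ : ℝ => ∫ x, f x ∂(s (μ τ))) (Set.Icc (0:ℝ) T) ∧
    ∀ t ∈ Set.Icc (0:ℝ) T,
      ∫ x, f x ∂(μ t) = (∫ x, f x ∂μ₀) + ∫ τ in Set.Icc (0:ℝ) t, ∫ x, f x ∂(s (μ τ))

/-- Weak solution of the Measure Differential Equation with Source
`μ̇ = V[μ] ⊕ s[μ]` on `[0,T]` (Definition of solution in the paper). -/
def IsSolMDES {n : ℕ} (V : Measure (Euc n) → Measure (TEuc n))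
    (s : Measure (Euc n) → Measure (Euc n)) (T : ℝ) (μ : ℝ → Measure (Euc n)) : Prop :=
  (∀ t ∈ Set.Icc (0:ℝ) T, GoodMeasure (μ t)) ∧ WgContinuousOn μ (Set.Icc (0:ℝ) T) ∧
  ∀ f : Euc n → ℝ, TestFun f →
    (∀ᵐ τ ∂(volume.restrict (Set.Icc (0:ℝ) T)),
      Integrable (fun q : TEuc n => @inner ℝ _ _ (gradient f q.1) q.2) (V (μ τ))) ∧
    IntegrableOn (fun τ : ℝ =>
      ∫ q : TEuc n, @inner ℝ _ _ (gradient f q.1) q.2 ∂(V (μ τ))) (Set.Icc (0:ℝ) T) ∧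
    IntegrableOn (fun τ : ℝ => ∫ x, f x ∂(s (μ τ))) (Set.Icc (0:ℝ) T) ∧
    ∀ t ∈ Set.Icc (0:ℝ) T,
      ∫ x, f x ∂(μ t) = (∫ x, f x ∂(μ 0)) +
        ∫ τ in Set.Icc (0:ℝ) t,
          ((∫ q : TEuc n, @inner ℝ _ _ (gradient f q.1) q.2 ∂(V (μ τ))) + ∫ x, f x ∂(s (μ τ)))

/-- A Lipschitz semigroup of solutions to the MDE `μ̇ = V[μ]` (Wasserstein version). -/
def IsLipSemigroupMDE {n : ℕ} (V : Measure (Euc n) → Measure (TEuc n)) (T : ℝ)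
    (S : ℝ → Measure (Euc n) → Measure (Euc n)) : Prop :=
  (∀ μ, GoodMeasure μ → S 0 μ = μ) ∧
  (∀ a b : ℝ, 0 ≤ a → 0 ≤ b → a + b ≤ T → ∀ μ, GoodMeasure μ → S (b + a) μ = S b (S a μ)) ∧
  (∀ μ, GoodMeasure μ → (∀ t ∈ Set.Icc (0:ℝ) T, GoodMeasure (S t μ)) ∧
    IsSolMDE V T (fun t => S t μ)) ∧
  (∀ R M : ℝ, 0 < R → 0 < M → ∃ C : ℝ, 0 < C ∧ ∀ μ ν : Measure (Euc n),
    GoodMeasure μ → GoodMeasure ν → msupp μ ∪ msupp ν ⊆ ball (0 : Euc n) R →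
    mass μ + mass ν ≤ M → ∀ t ∈ Set.Icc (0:ℝ) T,
      msupp (S t μ) ⊆ ball (0 : Euc n) (Real.exp (C * t) * (R + M + 1)) ∧
      (mass μ = mass ν → Wass (S t μ) (S t ν) ≤ Real.exp (C * t) * Wass μ ν) ∧
      (∀ u ∈ Set.Icc (0:ℝ) T, Wass (S t μ) (S u μ) ≤ C * |t - u|))

/-- A Lipschitz semigroup of solutions to the MDE with source `μ̇ = V[μ] ⊕ s[μ]`
(generalized Wasserstein version, Definition of Lipschitz semigroup in the paper). -/
def IsLipSemigroupMDES {n : ℕ} (V : Measure (Euc n) → Measure (TEuc n))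
    (s : Measure (Euc n) → Measure (Euc n)) (T : ℝ)
    (S : ℝ → Measure (Euc n) → Measure (Euc n)) : Prop :=
  (∀ μ, GoodMeasure μ → S 0 μ = μ) ∧
  (∀ a b : ℝ, 0 ≤ a → 0 ≤ b → a + b ≤ T → ∀ μ, GoodMeasure μ → S (b + a) μ = S b (S a μ)) ∧
  (∀ μ, GoodMeasure μ → IsSolMDES V s T (fun t => S t μ)) ∧
  (∀ R M : ℝ, 0 < R → 0 < M → ∃ C : ℝ, 0 < C ∧ ∀ μ ν : Measure (Euc n),
    GoodMeasure μ → GoodMeasure ν → msupp μ ∪ msupp ν ⊆ ball (0 : Euc n) R →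
    mass μ + mass ν ≤ M → ∀ t ∈ Set.Icc (0:ℝ) T,
      msupp (S t μ) ⊆ ball (0 : Euc n) (Real.exp (C * t) * (R + M + 1)) ∧
      GWass (S t μ) (S t ν) ≤ Real.exp (C * t) * GWass μ ν ∧
      (∀ u ∈ Set.Icc (0:ℝ) T, GWass (S t μ) (S u μ) ≤ C * |t - u|))

/-- `𝓜^D`: finite sums of Dirac masses with positive weights. -/
def IsDiracSum {n : ℕ} (μ : Measure (Euc n)) : Prop :=
  ∃ (k : ℕ) (m : Fin k → ℝ) (x : Fin k → Euc n), (∀ i, 0 < m i) ∧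
    μ = ∑ i : Fin k, (ENNReal.ofReal (m i)) • Measure.dirac (x i)

/-- A Dirac germ compatible with the PVF `V` (MDE version): `γ_μ : [0, ε(μ)] → 𝓜` is a
Lipschitz solution starting at `μ`, with `ε` uniformly positive on sets of Dirac sums
with uniformly bounded support. -/
def IsDiracGermMDE {n : ℕ} (V : Measure (Euc n) → Measure (TEuc n))
    (ε : Measure (Euc n) → ℝ) (γ : Measure (Euc n) → ℝ → Measure (Euc n)) : Prop :=
  (∀ μ, GoodMeasure μ → IsDiracSum μ →
    0 < ε μ ∧ γ μ 0 = μ ∧ (∀ t ∈ Set.Icc (0:ℝ) (ε μ), GoodMeasure (γ μ t)) ∧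
    IsSolMDE V (ε μ) (γ μ) ∧
    ∃ Lγ : ℝ, ∀ t ∈ Set.Icc (0:ℝ) (ε μ), ∀ u ∈ Set.Icc (0:ℝ) (ε μ),
      Wass (γ μ t) (γ μ u) ≤ Lγ * |t - u|) ∧
  (∀ R : ℝ, 0 < R → ∃ e : ℝ, 0 < e ∧ ∀ μ, GoodMeasure μ → IsDiracSum μ →
    msupp μ ⊆ ball (0 : Euc n) R → e ≤ ε μ)

/-- A Dirac germ for the MDE with source `μ̇ = V[μ] ⊕ s[μ]`. -/
def IsDiracGermMDES {n : ℕ} (V : Measure (Euc n) → Measure (TEuc n))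
    (s : Measure (Euc n) → Measure (Euc n))
    (ε : Measure (Euc n) → ℝ) (γ : Measure (Euc n) → ℝ → Measure (Euc n)) : Prop :=
  (∀ μ, GoodMeasure μ → IsDiracSum μ →
    0 < ε μ ∧ γ μ 0 = μ ∧ IsSolMDES V s (ε μ) (γ μ) ∧
    ∃ Lγ : ℝ, ∀ t ∈ Set.Icc (0:ℝ) (ε μ), ∀ u ∈ Set.Icc (0:ℝ) (ε μ),
      GWass (γ μ t) (γ μ u) ≤ Lγ * |t - u|) ∧
  (∀ R : ℝ, 0 < R → ∃ e : ℝ, 0 < e ∧ ∀ μ, GoodMeasure μ → IsDiracSum μ →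
    msupp μ ⊆ ball (0 : Euc n) R → e ≤ ε μ)

/-- Compatibility of a semigroup with a Dirac germ (Wasserstein version):
`W(S_t μ, γ_μ(t)) ≤ C(R,M) t²` for Dirac sums `μ` supported in `B(0,R)` with mass `≤ M`,
for times `t ≤ T` below the infimum of `ε` on this class. -/
def CompatMDE {n : ℕ} (T : ℝ) (S : ℝ → Measure (Euc n) → Measure (Euc n))
    (ε : Measure (Euc n) → ℝ) (γ : Measure (Euc n) → ℝ → Measure (Euc n)) : Prop :=
  ∀ R M : ℝ, 0 < R → 0 < M → ∃ C : ℝ, ∀ μ, GoodMeasure μ → IsDiracSum μ →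
    msupp μ ⊆ ball (0 : Euc n) R → mass μ ≤ M →
    ∀ t : ℝ, 0 ≤ t → t ≤ T →
      (∀ μ', GoodMeasure μ' → IsDiracSum μ' → msupp μ' ⊆ ball (0 : Euc n) R → mass μ' ≤ M →
        t ≤ ε μ') →
      Wass (S t μ) (γ μ t) ≤ C * t ^ 2

/-- Compatibility of a semigroup with a Dirac germ (generalized Wasserstein version). -/
def CompatMDES {n : ℕ} (T : ℝ) (S : ℝ → Measure (Euc n) → Measure (Euc n))
    (ε : Measure (Euc n) → ℝ) (γ : Measure (Euc n) → ℝ → Measure (Euc n)) : Prop :=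
  ∀ R M : ℝ, 0 < R → 0 < M → ∃ C : ℝ, ∀ μ, GoodMeasure μ → IsDiracSum μ →
    msupp μ ⊆ ball (0 : Euc n) R → mass μ ≤ M →
    ∀ t : ℝ, 0 ≤ t → t ≤ T →
      (∀ μ', GoodMeasure μ' → IsDiracSum μ' → msupp μ' ⊆ ball (0 : Euc n) R → mass μ' ≤ M →
        t ≤ ε μ') →
      GWass (S t μ) (γ μ t) ≤ C * t ^ 2

/-- Coordinatewise flooring to the grid `ℤ^n / h` of mesh `1/h`. -/
def floorPt {n : ℕ} (h : ℝ) (x : Euc n) : Euc n :=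
  (WithLp.equiv 2 (Fin n → ℝ)).symm
    (fun k => (⌊(WithLp.equiv 2 (Fin n → ℝ) x) k * h⌋ : ℝ) / h)

/-- The region `[-N, N + 1/h)^n` covered by the cubes based at grid points of mesh `1/h`
inside `[-N,N]^n`. -/
def gridRegion (n : ℕ) (N : ℕ) (h : ℝ) : Set (Euc n) :=
  {x | ∀ k : Fin n, (WithLp.equiv 2 (Fin n → ℝ) x) k ∈ Set.Ico (-(N:ℝ)) ((N:ℝ) + 1 / h)}

/-- Space discretization operator `𝒜ˣ_N(μ) = ∑ᵢ μ(xᵢ + Q) δ_{xᵢ}`, `Q = [0,1/N²)^n`. -/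
def AxN {n : ℕ} (N : ℕ) (μ : Measure (Euc n)) : Measure (Euc n) :=
  (μ.restrict (gridRegion n N ((N:ℝ)^2))).map (floorPt ((N:ℝ)^2))

/-- Velocity discretization operator
`𝒜ᵛ_N(V) = ∑_{i,j} V((xᵢ+Q) × (vⱼ+Q')) δ_{(xᵢ,vⱼ)}`, `Q' = [0,1/N)^n`. -/
def AvN {n : ℕ} (N : ℕ) (V : Measure (TEuc n)) : Measure (TEuc n) :=
  (V.restrict ((gridRegion n N ((N:ℝ)^2)) ×ˢ (gridRegion n N (N:ℝ)))).map
    (fun q => (floorPt ((N:ℝ)^2) q.1, floorPt (N:ℝ) q.2))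

section Aux

lemma aux_mass_nonneg {X : Type} [MeasurableSpace X] (μ : Measure X) : 0 ≤ mass μ :=
  ENNReal.toReal_nonneg

lemma aux_mass_mono {X : Type} [MeasurableSpace X] {μ ν : Measure X} (h : μ ≤ ν)
    (hν : ν Set.univ ≠ ⊤) : mass μ ≤ mass ν :=
  ENNReal.toReal_mono hν (Measure.le_iff'.mp h Set.univ)

lemma aux_tv_nonneg {X : Type} [MeasurableSpace X] {μ ν : Measure X}
    (hμ : μ Set.univ ≠ ⊤) (hν : ν Set.univ ≠ ⊤) : 0 ≤ tv μ ν := by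
  have h1 : mass (μ ⊓ ν) ≤ mass μ := aux_mass_mono inf_le_left hμ
  have h2 : mass (μ ⊓ ν) ≤ mass ν := aux_mass_mono inf_le_right hν
  unfold tv
  linarith

lemma aux_Wass_nonneg {X : Type} [PseudoMetricSpace X] [MeasurableSpace X]
    (μ ν : Measure X) : 0 ≤ Wass μ ν :=
  Real.sInf_nonneg fun _ ⟨_, _, hr⟩ => hr ▸ integral_nonneg fun _ => dist_nonneg

lemma aux_Wass_le {X : Type} [PseudoMetricSpace X] [MeasurableSpace X]
    {μ ν : Measure X} {π : Measure (X × X)} (hπ : π ∈ plans μ ν) :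
    Wass μ ν ≤ ∫ q, dist q.1 q.2 ∂π :=
  csInf_le ⟨0, fun _ ⟨_, _, hr⟩ => hr ▸ integral_nonneg fun _ => dist_nonneg⟩ ⟨π, hπ, rfl⟩

lemma aux_isOpen_compl_msupp {X : Type} [TopologicalSpace X] [MeasurableSpace X]
    (μ : Measure X) : IsOpen (msupp μ)ᶜ := by
  rw [isOpen_iff_mem_nhds]
  intro x hx
  simp only [Set.mem_compl_iff, msupp, Set.mem_setOf_eq] at hx
  push_neg at hx
  obtain ⟨U, hU, hU0⟩ := hx
  have hxint : x ∈ interior U := mem_interior_iff_mem_nhds.mpr hU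
  refine Filter.mem_of_superset (isOpen_interior.mem_nhds hxint) ?_
  intro y hy
  simp only [Set.mem_compl_iff, msupp, Set.mem_setOf_eq]
  intro h
  exact h (interior U) (isOpen_interior.mem_nhds hy)
    (measure_mono_null interior_subset hU0)

lemma aux_measure_compl_msupp {X : Type} [TopologicalSpace X]
    [SecondCountableTopology X] [MeasurableSpace X] (μ : Measure X) :
    μ (msupp μ)ᶜ = 0 := by
  have hcount : {t ∈ TopologicalSpace.countableBasis X | μ t = 0}.Countable :=
    (TopologicalSpace.countable_countableBasis X).mono (Set.sep_subset _ _)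
  have hsub : (msupp μ)ᶜ ⊆ ⋃₀ {t ∈ TopologicalSpace.countableBasis X | μ t = 0} := by
    intro x hx
    simp only [Set.mem_compl_iff, msupp, Set.mem_setOf_eq] at hx
    push_neg at hx
    obtain ⟨U, hU, hU0⟩ := hx
    obtain ⟨t, htB, hxt, htU⟩ :=
      (TopologicalSpace.isBasis_countableBasis X).mem_nhds_iff.mp hU
    exact ⟨t, ⟨htB, measure_mono_null htU hU0⟩, hxt⟩
  exact measure_mono_null hsub ((measure_sUnion_null_iff (μ := μ) hcount).mpr fun t ht => ht.2)

lemma aux_msupp_mono {X : Type} [TopologicalSpace X] [MeasurableSpace X]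
    {μ ν : Measure X} (h : μ ≤ ν) : msupp μ ⊆ msupp ν := by
  intro x hx U hU hν0
  exact hx U hU (le_antisymm (le_trans (Measure.le_iff'.mp h U) hν0.le) zero_le)

lemma aux_goodMeasure_of_le {X : Type} [PseudoMetricSpace X] [MeasurableSpace X]
    {μ' μ : Measure X} (h : μ' ≤ μ) (hμ : GoodMeasure μ) : GoodMeasure μ' :=
  ⟨ne_top_of_le_ne_top hμ.1 (Measure.le_iff'.mp h Set.univ),
    hμ.2.subset (aux_msupp_mono h)⟩

lemma aux_map_withDensity_comp {X Z : Type} [MeasurableSpace X] [MeasurableSpace Z]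
    (π : Measure Z) {g : Z → X} (hg : Measurable g) {f : X → ENNReal} (hf : Measurable f) :
    (π.withDensity (f ∘ g)).map g = (π.map g).withDensity f := by
  ext s hs
  rw [Measure.map_apply hg hs, withDensity_apply _ (hg hs), withDensity_apply _ hs,
    setLIntegral_map hs hf hg]
  rfl

lemma aux_plan_shrink {X Z : Type} [MeasurableSpace X] [MeasurableSpace Z]
    (π : Measure Z) {g : Z → X} (hg : Measurable g) {μ' μ₁ : Measure X}
    (hfin : IsFiniteMeasure μ') (h1 : μ₁ ≤ μ') (hmap : π.map g = μ') :
    ∃ π₁ : Measure Z, π₁ ≤ π ∧ π₁.map g = μ₁ := by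
  haveI := hfin
  haveI : IsFiniteMeasure μ₁ := isFiniteMeasure_of_le _ h1
  refine ⟨π.withDensity (μ₁.rnDeriv μ' ∘ g), ?_, ?_⟩
  · have hle1 : μ₁.rnDeriv μ' ≤ᵐ[μ'] 1 := Measure.rnDeriv_le_one_of_le h1
    have hle1' : ∀ᵐ x ∂(π.map g), μ₁.rnDeriv μ' x ≤ 1 := by rw [hmap]; exact hle1
    have hle2 : (μ₁.rnDeriv μ' ∘ g) ≤ᵐ[π] (1 : Z → ENNReal) := by
      filter_upwards [ae_of_ae_map hg.aemeasurable hle1'] with z hz using hz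
    calc π.withDensity (μ₁.rnDeriv μ' ∘ g) ≤ π.withDensity 1 := withDensity_mono hle2
      _ = π := withDensity_one
  · rw [aux_map_withDensity_comp π hg (Measure.measurable_rnDeriv μ₁ μ'), hmap,
      Measure.withDensity_rnDeriv_eq μ₁ μ' (Measure.absolutelyContinuous_of_le h1)]

lemma aux_inf_mass_key {X : Type} [MeasurableSpace X] (ν ν₁' ν' : Measure X)
    (hfin : IsFiniteMeasure ν') (h : ν₁' ≤ ν') :
    (ν ⊓ ν') Set.univ + ν₁' Set.univ ≤ (ν ⊓ ν₁') Set.univ + ν' Set.univ := by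
  haveI := hfin
  haveI : IsFiniteMeasure ν₁' := isFiniteMeasure_of_le _ h
  have hd : ν' - ν₁' + ν₁' = ν' := Measure.sub_add_cancel_of_le h
  have key : (ν ⊓ ν') Set.univ ≤ (ν ⊓ ν₁') Set.univ + (ν' - ν₁') Set.univ := by
    rw [Measure.inf_apply MeasurableSet.univ, Measure.inf_apply MeasurableSet.univ,
      ← tsub_le_iff_right]
    refine le_sInf ?_
    rintro m ⟨t, rfl⟩
    rw [tsub_le_iff_right]
    have h1 : sInf {m | ∃ t, m = ν (t ∩ Set.univ) + ν' (tᶜ ∩ Set.univ)} ≤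
        ν (t ∩ Set.univ) + ν' (tᶜ ∩ Set.univ) := sInf_le ⟨t, rfl⟩
    refine h1.trans ?_
    have h2 : ν' (tᶜ ∩ Set.univ) =
        (ν' - ν₁') (tᶜ ∩ Set.univ) + ν₁' (tᶜ ∩ Set.univ) := by
      conv_lhs => rw [← hd]
      rfl
    rw [h2]
    calc ν (t ∩ Set.univ) + ((ν' - ν₁') (tᶜ ∩ Set.univ) + ν₁' (tᶜ ∩ Set.univ))
        ≤ ν (t ∩ Set.univ) + ((ν' - ν₁') Set.univ + ν₁' (tᶜ ∩ Set.univ)) :=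
          add_le_add_right (add_le_add_left
            (measure_mono (μ := ν' - ν₁') (Set.subset_univ _)) _) _
      _ = ν (t ∩ Set.univ) + ν₁' (tᶜ ∩ Set.univ) + (ν' - ν₁') Set.univ := by ring
  calc (ν ⊓ ν') Set.univ + ν₁' Set.univ
      ≤ (ν ⊓ ν₁') Set.univ + (ν' - ν₁') Set.univ + ν₁' Set.univ := by gcongr
    _ = (ν ⊓ ν₁') Set.univ + ν' Set.univ := by
        rw [add_assoc, ← Measure.add_apply, hd]

lemma aux_plans_nonempty {X : Type} [MeasurableSpace X] {μ' ν' : Measure X}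
    (hμ : IsFiniteMeasure μ') (hν : IsFiniteMeasure ν') (hm : mass μ' = mass ν') :
    ∃ π : Measure (X × X), π ∈ plans μ' ν' := by
  haveI := hμ; haveI := hν
  have huniv : μ' Set.univ = ν' Set.univ :=
    (ENNReal.toReal_eq_toReal_iff' (measure_ne_top μ' _) (measure_ne_top ν' _)).mp hm
  by_cases h0 : μ' = 0
  · refine ⟨0, ?_, ?_⟩ <;>
      simp [h0, Measure.measure_univ_eq_zero.mp (huniv ▸ h0 ▸ (by simp : (0 : Measure X) Set.univ = 0))]
  · have hc0 : μ' Set.univ ≠ 0 := fun h => h0 (Measure.measure_univ_eq_zero.mp h)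
    have hcT : μ' Set.univ ≠ ⊤ := measure_ne_top μ' _
    refine ⟨(μ' Set.univ)⁻¹ • μ'.prod ν', ?_, ?_⟩
    · rw [Measure.map_smul, Measure.map_fst_prod, ← huniv, smul_smul,
        ENNReal.inv_mul_cancel hc0 hcT, one_smul]
    · rw [Measure.map_smul, Measure.map_snd_prod, smul_smul,
        ENNReal.inv_mul_cancel hc0 hcT, one_smul]

lemma aux_integrable_dist_plan {d : ℕ} {μ' ν' : Measure (Euc d)}
    {π : Measure (Euc d × Euc d)} (hμ' : GoodMeasure μ') (hν' : GoodMeasure ν')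
    (hπ : π ∈ plans μ' ν') :
    Integrable (fun q : Euc d × Euc d => dist q.1 q.2) π := by
  obtain ⟨h1, h2⟩ := hπ
  haveI : IsFiniteMeasure π := by
    constructor
    have huniv : π Set.univ = μ' Set.univ := by
      rw [← h1, Measure.map_apply measurable_fst MeasurableSet.univ, Set.preimage_univ]
    rw [huniv]
    exact hμ'.1.lt_top
  obtain ⟨R, hR⟩ := hμ'.2.subset_closedBall 0
  obtain ⟨R', hR'⟩ := hν'.2.subset_closedBall 0
  have hfst : ∀ᵐ q ∂π, q.1 ∈ msupp μ' := by
    rw [ae_iff]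
    have hm : MeasurableSet (msupp μ')ᶜ := (aux_isOpen_compl_msupp μ').measurableSet
    have hnull : π (Prod.fst ⁻¹' (msupp μ')ᶜ) = 0 := by
      rw [← Measure.map_apply measurable_fst hm, h1]
      exact aux_measure_compl_msupp μ'
    simpa [Set.preimage, Set.mem_compl_iff] using hnull
  have hsnd : ∀ᵐ q ∂π, q.2 ∈ msupp ν' := by
    rw [ae_iff]
    have hm : MeasurableSet (msupp ν')ᶜ := (aux_isOpen_compl_msupp ν').measurableSet
    have hnull : π (Prod.snd ⁻¹' (msupp ν')ᶜ) = 0 := by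
      rw [← Measure.map_apply measurable_snd hm, h2]
      exact aux_measure_compl_msupp ν'
    simpa [Set.preimage, Set.mem_compl_iff] using hnull
  refine ⟨continuous_dist.aestronglyMeasurable, HasFiniteIntegral.of_bounded (C := R + R') ?_⟩
  filter_upwards [hfst, hsnd] with q hq1 hq2
  have b1 : dist q.1 (0 : Euc d) ≤ R := Metric.mem_closedBall.mp (hR hq1)
  have b2 : dist (0 : Euc d) q.2 ≤ R' := by
    rw [dist_comm]; exact Metric.mem_closedBall.mp (hR' hq2)
  rw [Real.norm_eq_abs, abs_of_nonneg dist_nonneg]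
  calc dist q.1 q.2 ≤ dist q.1 0 + dist 0 q.2 := dist_triangle _ _ _
    _ ≤ R + R' := add_le_add b1 b2

end Aux

/-- the infimum defining `W^g` is unchanged under the additional constraint
that the competitors are sub-measures with equal mass. -/
theorem generalized_wasserstein_inf_submeasures {d : ℕ}
    (μ ν : Measure (Euc d)) (hμ : GoodMeasure μ) (hν : GoodMeasure ν) :
    GWass μ ν = sInf {r : ℝ | ∃ μ' ν' : Measure (Euc d), μ' ≤ μ ∧ ν' ≤ ν ∧
      mass μ' = mass ν' ∧ r = tv μ μ' + tv ν ν' + Wass μ' ν'} := by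
  haveI hμfin : IsFiniteMeasure μ := ⟨hμ.1.lt_top⟩
  haveI hνfin : IsFiniteMeasure ν := ⟨hν.1.lt_top⟩
  set A := {r : ℝ | ∃ μ' ν' : Measure (Euc d), GoodMeasure μ' ∧ GoodMeasure ν' ∧
    mass μ' = mass ν' ∧ r = tv μ μ' + tv ν ν' + Wass μ' ν'} with hA
  set B := {r : ℝ | ∃ μ' ν' : Measure (Euc d), μ' ≤ μ ∧ ν' ≤ ν ∧
    mass μ' = mass ν' ∧ r = tv μ μ' + tv ν ν' + Wass μ' ν'} with hB
  have hBA : B ⊆ A := by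
    rintro r ⟨μ', ν', h1, h2, h3, h4⟩
    exact ⟨μ', ν', aux_goodMeasure_of_le h1 hμ, aux_goodMeasure_of_le h2 hν, h3, h4⟩
  have hBne : B.Nonempty := ⟨tv μ 0 + tv ν 0 + Wass 0 0, 0, 0, Measure.zero_le μ, Measure.zero_le ν, rfl, rfl⟩
  have hAbdd : BddBelow A := by
    refine ⟨0, ?_⟩
    rintro r ⟨μ', ν', h1, h2, _, rfl⟩
    have t1 := aux_tv_nonneg hμ.1 h1.1
    have t2 := aux_tv_nonneg hν.1 h2.1
    have t3 := aux_Wass_nonneg μ' ν'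
    linarith
  have hBbdd : BddBelow B := by
    refine ⟨0, ?_⟩
    rintro r ⟨μ', ν', h1, h2, _, rfl⟩
    have t1 := aux_tv_nonneg hμ.1 (aux_goodMeasure_of_le h1 hμ).1
    have t2 := aux_tv_nonneg hν.1 (aux_goodMeasure_of_le h2 hν).1
    have t3 := aux_Wass_nonneg μ' ν'
    linarith
  have hGW : GWass μ ν = sInf A := rfl
  rw [hGW]
  refine le_antisymm (csInf_le_csInf hAbdd hBne hBA) ?_
  refine le_csInf ⟨_, hBA hBne.choose_spec⟩ ?_
  rintro r ⟨μ', ν', hg1, hg2, hm, rfl⟩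
  haveI hμ'fin : IsFiniteMeasure μ' := ⟨hg1.1.lt_top⟩
  haveI hν'fin : IsFiniteMeasure ν' := ⟨hg2.1.lt_top⟩
  refine le_of_forall_pos_le_add ?_
  intro ε hε
  -- choose a near-optimal plan between μ' and ν'
  obtain ⟨π₀, hπ₀⟩ := aux_plans_nonempty hμ'fin hν'fin hm
  have hSne : {s : ℝ | ∃ π ∈ plans μ' ν', s = ∫ q, dist q.1 q.2 ∂π}.Nonempty :=
    ⟨_, π₀, hπ₀, rfl⟩
  obtain ⟨s, hsS, hslt⟩ := Real.lt_sInf_add_pos hSne hε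
  obtain ⟨π, hπ, rfl⟩ := hsS
  -- step 1: shrink the first marginal to μ ⊓ μ'
  have hμ₁le' : μ ⊓ μ' ≤ μ' := inf_le_right
  obtain ⟨π₁, hπ₁le, hπ₁fst⟩ := aux_plan_shrink π measurable_fst hμ'fin hμ₁le' hπ.1
  set ν₁' := π₁.map Prod.snd with hν₁'def
  have hν₁'le : ν₁' ≤ ν' := hπ.2 ▸ Measure.map_mono hπ₁le measurable_snd
  haveI hν₁'fin : IsFiniteMeasure ν₁' := isFiniteMeasure_of_le _ hν₁'le
  -- step 2: shrink the second marginal to ν ⊓ ν₁'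
  obtain ⟨π₂, hπ₂le, hπ₂snd⟩ :=
    aux_plan_shrink π₁ measurable_snd hν₁'fin (inf_le_right : ν ⊓ ν₁' ≤ ν₁') rfl
  set μ₂ := π₂.map Prod.fst with hμ₂def
  set ν₂ := ν ⊓ ν₁' with hν₂def
  have hμ₂le₁ : μ₂ ≤ μ ⊓ μ' := hπ₁fst ▸ Measure.map_mono hπ₂le measurable_fst
  have hμ₂leμ : μ₂ ≤ μ := hμ₂le₁.trans inf_le_left
  have hν₂leν : ν₂ ≤ ν := inf_le_left
  have hπ₂plans : π₂ ∈ plans μ₂ ν₂ := ⟨rfl, hπ₂snd⟩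
  -- mass identities at the ENNReal level
  have hmap_univ : ∀ (ρ : Measure (Euc d × Euc d)) (g : Euc d × Euc d → Euc d),
      Measurable g → (ρ.map g) Set.univ = ρ Set.univ := by
    intro ρ g hg
    rw [Measure.map_apply hg MeasurableSet.univ, Set.preimage_univ]
  have hν₁'univ : ν₁' Set.univ = (μ ⊓ μ') Set.univ := by
    rw [hν₁'def, hmap_univ π₁ Prod.snd measurable_snd, ← hπ₁fst,
      hmap_univ π₁ Prod.fst measurable_fst]
  have hμ₂univ : μ₂ Set.univ = ν₂ Set.univ := by
    rw [hμ₂def, hmap_univ π₂ Prod.fst measurable_fst, ← hπ₂snd,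
      hmap_univ π₂ Prod.snd measurable_snd]
  have hmass₂ : mass μ₂ = mass ν₂ := by
    unfold mass
    rw [hμ₂univ]
  -- membership of the candidate in B
  have hmem : tv μ μ₂ + tv ν ν₂ + Wass μ₂ ν₂ ∈ B :=
    ⟨μ₂, ν₂, hμ₂leμ, hν₂leν, hmass₂, rfl⟩
  refine (csInf_le hBbdd hmem).trans ?_
  -- cost estimates
  have hint : Integrable (fun q : Euc d × Euc d => dist q.1 q.2) π :=
    aux_integrable_dist_plan hg1 hg2 hπ
  have hπ₂leπ : π₂ ≤ π := hπ₂le.trans hπ₁le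
  have hcost : Wass μ₂ ν₂ ≤ ∫ q, dist q.1 q.2 ∂π :=
    (aux_Wass_le hπ₂plans).trans
      (integral_mono_measure hπ₂leπ (Filter.Eventually.of_forall fun _ => dist_nonneg) hint)
  -- tv computations for submeasures
  have e1 : tv μ μ₂ = mass μ - mass μ₂ := by
    unfold tv
    rw [inf_eq_right.mpr hμ₂leμ]
    ring
  have e2 : tv ν ν₂ = mass ν - mass ν₂ := by
    unfold tv
    rw [inf_eq_right.mpr hν₂leν]
    ring
  -- the key mass inequality, transferred to ℝ
  have hkey := aux_inf_mass_key ν ν₁' ν' hν'fin hν₁'le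
  have hfin1 : (ν ⊓ ν') Set.univ ≠ ⊤ :=
    ne_top_of_le_ne_top (measure_ne_top ν _) (Measure.le_iff'.mp inf_le_left Set.univ)
  have hfin2 : ν₁' Set.univ ≠ ⊤ := measure_ne_top ν₁' _
  have hfin3 : (ν ⊓ ν₁') Set.univ ≠ ⊤ :=
    ne_top_of_le_ne_top (measure_ne_top ν _) (Measure.le_iff'.mp inf_le_left Set.univ)
  have hfin4 : ν' Set.univ ≠ ⊤ := measure_ne_top ν' _
  have hkeyR : mass (ν ⊓ ν') + mass ν₁' ≤ mass (ν ⊓ ν₁') + mass ν' := by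
    have := ENNReal.toReal_mono (by
      exact ENNReal.add_ne_top.mpr ⟨hfin3, hfin4⟩) hkey
    rwa [ENNReal.toReal_add hfin1 hfin2, ENNReal.toReal_add hfin3 hfin4] at this
  have hmassν₁' : mass ν₁' = mass (μ ⊓ μ') := by
    unfold mass
    rw [hν₁'univ]
  -- final arithmetic
  have f1 : tv μ μ' = mass μ + mass μ' - 2 * mass (μ ⊓ μ') := rfl
  have f2 : tv ν ν' = mass ν + mass ν' - 2 * mass (ν ⊓ ν') := rfl
  have hm' : mass μ' = mass ν' := hm
  have hνmass : mass (ν ⊓ ν₁') = mass ν₂ := rfl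
  rw [e1, e2, f1, f2]
  rw [hmassν₁', hνmass] at hkeyR
  have hfinal : ∫ q, dist q.1 q.2 ∂π < Wass μ' ν' + ε := hslt
  linarith [hcost, hfinal, hkeyR, hmass₂, hm']

end
end

section
/- Let $v_t, w_t$ be time-varying vector fields on $\mathbb{R}^d$, uniformly Lipschitz in the space variable with common Lipschitz constant $L$ and uniformly bounded, and let $\phi^t, \psi^t$ be the flows generated by $v$ and $w$ respectively ($\phi^0 = \mathrm{id}$, $\partial_t \phi^t(x) = v_t(\phi^t(x))$, similarly for $\psi$). Then for all $\mu,\nu \in \mathcal{M}(\mathbb{R}^d)$ and all $t \ge 0$: (i) $W^g(\phi^t\#\mu, \phi^t\#\nu) \le e^{Lt} W^g(\mu,\nu)$; (ii) $W^g(\mu, \phi^t\#\mu) \le t\, \|v\|_{C^0}\, |\mu|$; (iii) $W^g(\phi^t\#\mu, \psi^t\#\nu) \le e^{Lt} W^g(\mu,\nu) + \frac{e^{Lt}-1}{L}\, |\mu|\, \sup_{\tau\in[0,t]} \|v_\tau - w_\tau\|_{C^0}$. -/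
open MeasureTheory Set Metric Filter

noncomputable section

section AuxLemmas

open MeasureTheory

namespace GWFE

variable {X : Type} [MeasurableSpace X]

lemma mass_nonneg (μ : Measure X) : 0 ≤ mass μ := ENNReal.toReal_nonneg

lemma mass_mono {μ ν : Measure X} (h : μ ≤ ν) (hν : ν Set.univ ≠ ⊤) : mass μ ≤ mass ν :=
  ENNReal.toReal_mono hν (Measure.le_iff'.1 h Set.univ)

lemma univ_map {Y : Type} [MeasurableSpace Y] (μ : Measure X) {f : X → Y} (hf : Measurable f) :
    (μ.map f) Set.univ = μ Set.univ := by
  rw [Measure.map_apply hf MeasurableSet.univ, Set.preimage_univ]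

lemma mass_map {Y : Type} [MeasurableSpace Y] (μ : Measure X) {f : X → Y} (hf : Measurable f) :
    mass (μ.map f) = mass μ := by
  unfold mass; rw [univ_map μ hf]

lemma ne_top_of_le {μ ν : Measure X} (h : μ ≤ ν) (hν : ν Set.univ ≠ ⊤) : μ Set.univ ≠ ⊤ :=
  fun h0 => hν (top_le_iff.1 (h0 ▸ Measure.le_iff'.1 h Set.univ))

lemma tv_self (μ : Measure X) : tv μ μ = 0 := by
  unfold tv; rw [inf_idem]; ring

lemma tv_nonneg {μ ν : Measure X} (hμ : μ Set.univ ≠ ⊤) (hν : ν Set.univ ≠ ⊤) : 0 ≤ tv μ ν := by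
  have h1 : mass (μ ⊓ ν) ≤ mass μ := mass_mono inf_le_left hμ
  have h2 : mass (μ ⊓ ν) ≤ mass ν := mass_mono inf_le_right hν
  unfold tv; linarith

lemma tv_of_le {μ ν : Measure X} (h : ν ≤ μ) : tv μ ν = mass μ - mass ν := by
  unfold tv; rw [inf_eq_right.2 h]; ring

lemma tv_map {Y : Type} [MeasurableSpace Y] {μ ν : Measure X} {f : X → Y} (hf : Measurable f)
    (hμ : μ Set.univ ≠ ⊤) : tv (μ.map f) (ν.map f) ≤ tv μ ν := by
  have h1 : (μ ⊓ ν).map f ≤ μ.map f ⊓ ν.map f :=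
    le_inf (Measure.map_mono inf_le_left hf) (Measure.map_mono inf_le_right hf)
  have hfin : (μ.map f ⊓ ν.map f) Set.univ ≠ ⊤ := by
    refine ne_top_of_le inf_le_left ?_
    rw [univ_map μ hf]; exact hμ
  have h2 : mass (μ ⊓ ν) ≤ mass (μ.map f ⊓ ν.map f) := by
    rw [← mass_map (μ ⊓ ν) hf]
    exact mass_mono h1 hfin
  unfold tv
  rw [mass_map μ hf, mass_map ν hf]
  linarith

lemma inf_mass_ineq {ν β β' : Measure X} (hβ : β ≤ β') :
    (ν ⊓ β') Set.univ + β Set.univ ≤ (ν ⊓ β) Set.univ + β' Set.univ := by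
  conv_rhs => rw [Measure.inf_apply MeasurableSet.univ]
  rw [ENNReal.sInf_add]
  refine le_iInf₂ fun m hm => ?_
  obtain ⟨u, rfl⟩ := hm
  simp only [Set.inter_univ]
  set u₀ := toMeasurable ν u with hu₀
  have hA : (ν ⊓ β') Set.univ ≤ ν u₀ + β' u₀ᶜ := by
    rw [Measure.inf_apply MeasurableSet.univ]
    exact sInf_le ⟨u₀, by simp only [Set.inter_univ]⟩
  have h1 : β Set.univ ≤ β u₀ + β u₀ᶜ := by
    calc β Set.univ = β (u₀ ∪ u₀ᶜ) := by rw [Set.union_compl_self]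
    _ ≤ β u₀ + β u₀ᶜ := measure_union_le _ _
  have h2 : β u₀ ≤ β' u₀ := Measure.le_iff'.1 hβ _
  have h3 : β u₀ᶜ ≤ β uᶜ := measure_mono (Set.compl_subset_compl.2 (subset_toMeasurable ν u))
  have h4 : ν u₀ = ν u := measure_toMeasurable u
  have h5 : β' u₀ + β' u₀ᶜ = β' Set.univ := measure_add_measure_compl (measurableSet_toMeasurable ν u)
  calc (ν ⊓ β') Set.univ + β Set.univ ≤ (ν u₀ + β' u₀ᶜ) + (β u₀ + β u₀ᶜ) := add_le_add hA h1
  _ ≤ (ν u₀ + β' u₀ᶜ) + (β' u₀ + β uᶜ) := add_le_add le_rfl (add_le_add h2 h3)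
  _ = (ν u + β uᶜ) + (β' u₀ + β' u₀ᶜ) := by rw [h4]; ring
  _ = ν u + β uᶜ + β' Set.univ := by rw [h5]

lemma tv_le_of_le {ν β β' : Measure X} (hν : ν Set.univ ≠ ⊤) (hβ' : β' Set.univ ≠ ⊤)
    (hβ : β ≤ β') : tv ν β ≤ tv ν β' + (mass β' - mass β) := by
  have h := inf_mass_ineq (ν := ν) hβ
  have hβf : β Set.univ ≠ ⊤ := ne_top_of_le hβ hβ'
  have h1 : (ν ⊓ β') Set.univ ≠ ⊤ := ne_top_of_le inf_le_left hν
  have h2 : (ν ⊓ β) Set.univ ≠ ⊤ := ne_top_of_le inf_le_left hν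
  have h' : ((ν ⊓ β') Set.univ + β Set.univ).toReal ≤ ((ν ⊓ β) Set.univ + β' Set.univ).toReal :=
    ENNReal.toReal_mono (ENNReal.add_ne_top.2 ⟨h2, hβ'⟩) h
  rw [ENNReal.toReal_add h1 hβf, ENNReal.toReal_add h2 hβ'] at h'
  unfold tv mass at *
  linarith

end GWFE

end AuxLemmas

namespace GWFE

variable {X : Type} [MeasurableSpace X]

lemma plan_univ_fst {μ ν : Measure X} {π : Measure (X × X)} (hπ : π ∈ plans μ ν) :
    π Set.univ = μ Set.univ := by
  rw [← hπ.1, univ_map π measurable_fst]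

lemma Wass_nonneg [PseudoMetricSpace X] (μ ν : Measure X) : 0 ≤ Wass μ ν :=
  Real.sInf_nonneg fun r hr => by
    obtain ⟨π, _, rfl⟩ := hr
    exact integral_nonneg fun q => dist_nonneg

lemma Wass_le_plan [PseudoMetricSpace X] {μ ν : Measure X} {π : Measure (X × X)}
    (hπ : π ∈ plans μ ν) : Wass μ ν ≤ ∫ q, dist q.1 q.2 ∂π :=
  csInf_le ⟨0, fun r hr => by obtain ⟨π', _, rfl⟩ := hr; exact integral_nonneg fun q => dist_nonneg⟩
    ⟨π, hπ, rfl⟩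

lemma exists_plan {μ ν : Measure X} (hμ : μ Set.univ ≠ ⊤) (hν : ν Set.univ ≠ ⊤)
    (hm : mass μ = mass ν) : ∃ π : Measure (X × X), π ∈ plans μ ν := by
  have hμf : IsFiniteMeasure μ := ⟨lt_top_iff_ne_top.2 hμ⟩
  have hνf : IsFiniteMeasure ν := ⟨lt_top_iff_ne_top.2 hν⟩
  have huv : μ Set.univ = ν Set.univ := (ENNReal.toReal_eq_toReal_iff' hμ hν).1 hm
  by_cases h0 : μ Set.univ = 0
  · have hμ0 : μ = 0 := Measure.measure_univ_eq_zero.1 h0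
    have hν0 : ν = 0 := Measure.measure_univ_eq_zero.1 (by rw [← huv]; exact h0)
    exact ⟨0, by rw [Measure.map_zero, hμ0], by rw [Measure.map_zero, hν0]⟩
  · refine ⟨(μ Set.univ)⁻¹ • μ.prod ν, ?_, ?_⟩
    · rw [Measure.map_smul, Measure.map_fst_prod, ← huv, smul_smul,
        ENNReal.inv_mul_cancel h0 hμ, one_smul]
    · rw [Measure.map_smul, Measure.map_snd_prod, smul_smul,
        ENNReal.inv_mul_cancel h0 hμ, one_smul]

lemma exists_plan_lt [PseudoMetricSpace X] {μ ν : Measure X} (hμ : μ Set.univ ≠ ⊤)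
    (hν : ν Set.univ ≠ ⊤) (hm : mass μ = mass ν) {ε : ℝ} (hε : 0 < ε) :
    ∃ π ∈ plans μ ν, ∫ q, dist q.1 q.2 ∂π < Wass μ ν + ε := by
  obtain ⟨π₀, hπ₀⟩ := exists_plan hμ hν hm
  have hne : {r : ℝ | ∃ π ∈ plans μ ν, r = ∫ q, dist q.1 q.2 ∂π}.Nonempty := ⟨_, π₀, hπ₀, rfl⟩
  obtain ⟨r, hr, hrlt⟩ := exists_lt_of_csInf_lt hne (lt_add_of_pos_right (Wass μ ν) hε)
  obtain ⟨π, hπ, rfl⟩ := hr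
  exact ⟨π, hπ, hrlt⟩

lemma msupp_zero [TopologicalSpace X] : msupp (0 : Measure X) = ∅ :=
  Set.eq_empty_iff_forall_notMem.2 fun x hx => hx Set.univ Filter.univ_mem rfl

lemma good_zero [PseudoMetricSpace X] : GoodMeasure (0 : Measure X) :=
  ⟨by simp, by rw [msupp_zero]; exact Bornology.isBounded_empty⟩

lemma GWass_lb [PseudoMetricSpace X] {μ ν : Measure X} (hμ : μ Set.univ ≠ ⊤)
    (hν : ν Set.univ ≠ ⊤) :
    ∀ r ∈ {r : ℝ | ∃ μ' ν' : Measure X, GoodMeasure μ' ∧ GoodMeasure ν' ∧ mass μ' = mass ν' ∧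
      r = tv μ μ' + tv ν ν' + Wass μ' ν'}, (0:ℝ) ≤ r := by
  rintro r ⟨μ', ν', h1, h2, _, rfl⟩
  have := tv_nonneg hμ h1.1
  have := tv_nonneg hν h2.1
  have := Wass_nonneg μ' ν'
  linarith

lemma GWass_le [PseudoMetricSpace X] {μ ν μ' ν' : Measure X} (hμ : μ Set.univ ≠ ⊤)
    (hν : ν Set.univ ≠ ⊤) (h1 : GoodMeasure μ') (h2 : GoodMeasure ν')
    (hm : mass μ' = mass ν') : GWass μ ν ≤ tv μ μ' + tv ν ν' + Wass μ' ν' :=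
  csInf_le ⟨0, GWass_lb hμ hν⟩ ⟨μ', ν', h1, h2, hm, rfl⟩

lemma GWass_nonneg [PseudoMetricSpace X] {μ ν : Measure X} (hμ : μ Set.univ ≠ ⊤)
    (hν : ν Set.univ ≠ ⊤) : 0 ≤ GWass μ ν :=
  le_csInf ⟨_, 0, 0, good_zero, good_zero, rfl, rfl⟩ (GWass_lb hμ hν)

lemma exists_good_lt [PseudoMetricSpace X] {μ ν : Measure X} (hμ : μ Set.univ ≠ ⊤)
    (hν : ν Set.univ ≠ ⊤) {ε : ℝ} (hε : 0 < ε) :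
    ∃ μ' ν' : Measure X, GoodMeasure μ' ∧ GoodMeasure ν' ∧ mass μ' = mass ν' ∧
      tv μ μ' + tv ν ν' + Wass μ' ν' < GWass μ ν + ε := by
  have hne : {r : ℝ | ∃ μ' ν' : Measure X, GoodMeasure μ' ∧ GoodMeasure ν' ∧
      mass μ' = mass ν' ∧ r = tv μ μ' + tv ν ν' + Wass μ' ν'}.Nonempty :=
    ⟨_, 0, 0, good_zero, good_zero, rfl, rfl⟩
  obtain ⟨r, hr, hrlt⟩ := exists_lt_of_csInf_lt hne (lt_add_of_pos_right (GWass μ ν) hε)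
  obtain ⟨μ', ν', h1, h2, h3, rfl⟩ := hr
  exact ⟨μ', ν', h1, h2, h3, hrlt⟩

lemma msupp_mono [TopologicalSpace X] {μ ν : Measure X} (h : μ ≤ ν) : msupp μ ⊆ msupp ν :=
  fun x hx U hU h0 => hx U hU (le_antisymm (h0 ▸ Measure.le_iff'.1 h U) zero_le)

lemma msupp_compl_null {Y : Type} [TopologicalSpace Y] [SecondCountableTopology Y]
    [MeasurableSpace Y] (μ : Measure Y) : μ (msupp μ)ᶜ = 0 := by
  obtain ⟨T, hTc, hTS, hTU⟩ := TopologicalSpace.isOpen_sUnion_countable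
    {U : Set Y | IsOpen U ∧ μ U = 0} (fun U hU => hU.1)
  have hT0 : μ (⋃₀ {U : Set Y | IsOpen U ∧ μ U = 0}) = 0 := by
    rw [← hTU]
    exact (measure_sUnion_null_iff hTc).2 fun s hs => (hTS hs).2
  refine measure_mono_null ?_ hT0
  intro x hx
  simp only [msupp, Set.mem_compl_iff, Set.mem_setOf_eq, not_forall] at hx
  obtain ⟨U, hU, h0⟩ := hx
  obtain ⟨V, hVU, hVopen, hxV⟩ := mem_nhds_iff.1 hU
  exact ⟨V, ⟨hVopen, measure_mono_null hVU (not_not.1 h0)⟩, hxV⟩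

lemma msupp_map_subset {Y : Type} [TopologicalSpace Y] [MeasurableSpace Y]
    [OpensMeasurableSpace Y] {μ : Measure X} {f : X → Y} (hf : Measurable f) {S : Set X}
    (hS : μ Sᶜ = 0) : msupp (μ.map f) ⊆ closure (f '' S) := by
  intro x hx
  by_contra hc
  refine hx (closure (f '' S))ᶜ (isClosed_closure.isOpen_compl.mem_nhds hc) ?_
  rw [Measure.map_apply hf isClosed_closure.isOpen_compl.measurableSet]
  refine measure_mono_null (fun y hy => ?_) hS
  exact fun hyS => hy (subset_closure (Set.mem_image_of_mem f hyS))

lemma good_map {d : ℕ} {μ : Measure (Euc d)} (hfin : μ Set.univ ≠ ⊤)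
    (hbd : Bornology.IsBounded (msupp μ)) {f : Euc d → Euc d} {K : NNReal}
    (hf : LipschitzWith K f) : GoodMeasure (μ.map f) := by
  refine ⟨by rw [univ_map μ hf.continuous.measurable]; exact hfin, ?_⟩
  have h1 : μ (msupp μ)ᶜ = 0 := msupp_compl_null μ
  have h2 := msupp_map_subset hf.continuous.measurable h1
  exact ((hf.isBounded_image hbd).closure).subset h2

end GWFE

namespace GWFE

variable {X : Type} [MeasurableSpace X]

lemma exists_restrict_plan {μ μ' ν' : Measure X} {π : Measure (X × X)}
    (hμ'f : IsFiniteMeasure μ') (hπ : π ∈ plans μ' ν') :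
    ∃ πt : Measure (X × X), πt ≤ π ∧ πt ∈ plans (μ ⊓ μ') (πt.map Prod.snd) := by
  have hle : μ ⊓ μ' ≤ μ' := inf_le_right
  have hif : IsFiniteMeasure (μ ⊓ μ') := isFiniteMeasure_of_le μ' hle
  set g := (μ ⊓ μ').rnDeriv μ' with hg
  have hmg : Measurable g := Measure.measurable_rnDeriv _ _
  set πt := π.withDensity (fun q => g q.1) with hπt
  have hfst : πt.map Prod.fst = μ ⊓ μ' := by
    ext s hs
    rw [Measure.map_apply measurable_fst hs, hπt, withDensity_apply _ (measurable_fst hs)]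
    have h1 : ∫⁻ x in s, g x ∂(π.map Prod.fst) = ∫⁻ q in Prod.fst ⁻¹' s, g q.1 ∂π :=
      setLIntegral_map hs hmg measurable_fst
    rw [← h1, hπ.1, ← withDensity_apply _ hs,
      Measure.withDensity_rnDeriv_eq _ _ hle.absolutelyContinuous]
  have hlep : πt ≤ π := by
    have h1 : ∀ᵐ x ∂μ', g x ≤ 1 := Measure.rnDeriv_le_one_of_le hle
    have h2 : ∀ᵐ x ∂(π.map Prod.fst), g x ≤ 1 := by rw [hπ.1]; exact h1
    have hae : ∀ᵐ q ∂π, g q.1 ≤ 1 :=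
      (ae_map_iff measurable_fst.aemeasurable (measurableSet_le hmg measurable_const)).1 h2
    refine Measure.le_iff.2 fun s hs => ?_
    rw [hπt, withDensity_apply _ hs]
    calc ∫⁻ q in s, g q.1 ∂π ≤ ∫⁻ _ in s, 1 ∂π :=
          lintegral_mono_ae (ae_restrict_of_ae hae)
    _ = π s := by rw [setLIntegral_one]
  exact ⟨πt, hlep, ⟨hfst, rfl⟩⟩

end GWFE

namespace GWFE

variable {d : ℕ}

lemma flow_dist {v w : ℝ → Euc d → Euc d} {L : NNReal} (hL : 0 < (L : ℝ))
    (hvL : ∀ s, LipschitzWith L (v s))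
    {φ ψ : ℝ → Euc d → Euc d}
    (hφ : ∀ x s, HasDerivAt (fun r => φ r x) (v s (φ s x)) s)
    (hψ : ∀ x s, HasDerivAt (fun r => ψ r x) (w s (ψ s x)) s)
    {t : ℝ} (ht : 0 ≤ t) {D : ℝ}
    (hD : ∀ τ ∈ Set.Icc (0:ℝ) t, ∀ x, ‖v τ x - w τ x‖ ≤ D) (x y : Euc d) :
    dist (φ t x) (ψ t y) ≤
      dist (φ 0 x) (ψ 0 y) * Real.exp (L * t) + D / L * (Real.exp (L * t) - 1) := by
  have h := dist_le_of_approx_trajectories_ODE (v := v) (K := L) (a := 0) (b := t)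
    (εf := 0) (εg := D) (δ := dist (φ 0 x) (ψ 0 y)) hvL
    (fun s _ => (hφ x s).continuousAt.continuousWithinAt)
    (fun s _ => (hφ x s).hasDerivWithinAt)
    (fun s _ => by rw [dist_self])
    (fun s _ => (hψ y s).continuousAt.continuousWithinAt)
    (fun s _ => (hψ y s).hasDerivWithinAt)
    (fun s hs => by
      rw [dist_eq_norm, ← norm_neg]
      simpa using hD s (Set.Ico_subset_Icc_self hs) (ψ s y))
    le_rfl t (Set.right_mem_Icc.2 ht)
  rwa [gronwallBound_of_K_ne_0 (ne_of_gt hL), zero_add, sub_zero] at h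

lemma flow_lip {v : ℝ → Euc d → Euc d} {L : NNReal} (hL : 0 < (L : ℝ))
    (hvL : ∀ s, LipschitzWith L (v s))
    {φ : ℝ → Euc d → Euc d} (hφ0 : ∀ x, φ 0 x = x)
    (hφ : ∀ x s, HasDerivAt (fun r => φ r x) (v s (φ s x)) s)
    {t : ℝ} (ht : 0 ≤ t) :
    LipschitzWith (Real.exp (L * t)).toNNReal (φ t) := by
  refine LipschitzWith.of_dist_le_mul fun x y => ?_
  have h := flow_dist hL hvL hφ hφ (w := v) ht
    (D := 0) (fun τ _ x => by simp) x y
  rw [hφ0 x, hφ0 y] at h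
  rw [Real.coe_toNNReal _ (Real.exp_nonneg _)]
  calc dist (φ t x) (φ t y) ≤ dist x y * Real.exp (L * t) + 0 / L * (Real.exp (L * t) - 1) := h
  _ = Real.exp (L * t) * dist x y := by ring

lemma flow_disp {v : ℝ → Euc d → Euc d} {Cv : ℝ} (hCv : ∀ s x, ‖v s x‖ ≤ Cv)
    {φ : ℝ → Euc d → Euc d} (hφ0 : ∀ x, φ 0 x = x)
    (hφ : ∀ x s, HasDerivAt (fun r => φ r x) (v s (φ s x)) s)
    {t : ℝ} (ht : 0 ≤ t) (x : Euc d) :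
    dist x (φ t x) ≤ Cv * t := by
  have h := Convex.norm_image_sub_le_of_norm_hasDerivWithin_le
    (f := fun r => φ r x) (f' := fun r => v r (φ r x)) (C := Cv) (s := Set.Icc 0 t)
    (fun s _ => (hφ x s).hasDerivWithinAt) (fun s _ => hCv s _) (convex_Icc 0 t)
    (Set.left_mem_Icc.2 ht) (Set.right_mem_Icc.2 ht)
  rw [hφ0 x] at h
  calc dist x (φ t x) = ‖φ t x - x‖ := by rw [dist_comm, dist_eq_norm]
  _ ≤ Cv * ‖t - 0‖ := h
  _ = Cv * t := by rw [sub_zero, Real.norm_of_nonneg ht]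

end GWFE

namespace GWFE

lemma le_of_forall_pos_le_add' {a b : ℝ} (h : ∀ ε : ℝ, 0 < ε → a ≤ b + ε) : a ≤ b := by
  by_contra hc
  push_neg at hc
  have := h ((a - b) / 2) (by linarith)
  linarith

lemma GWass_flow_pair {d : ℕ} (v w : ℝ → Euc d → Euc d) (L : NNReal) (hL : 0 < (L : ℝ))
    (hvL : ∀ s, LipschitzWith L (v s)) (hwL : ∀ s, LipschitzWith L (w s))
    (φ ψ : ℝ → Euc d → Euc d)
    (hφ0 : ∀ x, φ 0 x = x) (hψ0 : ∀ x, ψ 0 x = x)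
    (hφ : ∀ x s, HasDerivAt (fun r => φ r x) (v s (φ s x)) s)
    (hψ : ∀ x s, HasDerivAt (fun r => ψ r x) (w s (ψ s x)) s)
    (μ ν : Measure (Euc d)) (hμ : GoodMeasure μ) (hν : GoodMeasure ν)
    (t : ℝ) (ht : 0 ≤ t) (D : ℝ)
    (hD : ∀ τ ∈ Set.Icc (0:ℝ) t, ∀ x, ‖v τ x - w τ x‖ ≤ D) :
    GWass (μ.map (φ t)) (ν.map (ψ t)) ≤
      Real.exp (L * t) * GWass μ ν + (Real.exp (L * t) - 1) / L * mass μ * D := by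
  set E := Real.exp (↑L * t) with hE
  have hE0 : 0 < E := Real.exp_pos _
  have hE1 : 1 ≤ E := Real.one_le_exp (mul_nonneg L.coe_nonneg ht)
  have hD0 : 0 ≤ D := le_trans (norm_nonneg _) (hD 0 (Set.left_mem_Icc.2 ht) 0)
  have hφlip := flow_lip hL hvL hφ0 hφ ht
  have hψlip := flow_lip hL hwL hψ0 hψ ht
  have hφm : Measurable (φ t) := hφlip.continuous.measurable
  have hψm : Measurable (ψ t) := hψlip.continuous.measurable
  have hμfin := hμ.1
  have hνfin := hν.1
  have hMfin : (μ.map (φ t)) Set.univ ≠ ⊤ := by rw [univ_map μ hφm]; exact hμfin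
  have hNfin : (ν.map (ψ t)) Set.univ ≠ ⊤ := by rw [univ_map ν hψm]; exact hνfin
  refine le_of_forall_pos_le_add' fun ε hε => ?_
  set ε₁ := ε / (2 * E) with hε₁
  have hε₁0 : 0 < ε₁ := div_pos hε (by linarith)
  obtain ⟨μ', ν', hgμ', hgν', hmass', hlt⟩ := exists_good_lt hμfin hνfin hε₁0
  have hμ'fin := hgμ'.1
  have hν'fin := hgν'.1
  have hμ'F : IsFiniteMeasure μ' := ⟨lt_top_iff_ne_top.2 hμ'fin⟩
  have hν'F : IsFiniteMeasure ν' := ⟨lt_top_iff_ne_top.2 hν'fin⟩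
  obtain ⟨π, hπ, hπcost⟩ := exists_plan_lt hμ'fin hν'fin hmass' hε₁0
  have hπF : IsFiniteMeasure π := ⟨by rw [plan_univ_fst hπ]; exact lt_top_iff_ne_top.2 hμ'fin⟩
  obtain ⟨πt, hπtle, hπtplan⟩ := exists_restrict_plan (μ := μ) hμ'F hπ
  set μt := μ ⊓ μ' with hμt
  set νt := πt.map Prod.snd with hνt
  have hπtF : IsFiniteMeasure πt := isFiniteMeasure_of_le π hπtle
  have hμtleμ : μt ≤ μ := inf_le_left
  have hμtfin : μt Set.univ ≠ ⊤ := ne_top_of_le hμtleμ hμfin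
  have hνtle : νt ≤ ν' := by rw [hνt, ← hπ.2]; exact Measure.map_mono hπtle measurable_snd
  have hνtfin : νt Set.univ ≠ ⊤ := ne_top_of_le hνtle hν'fin
  have hμtuniv : μt Set.univ = πt Set.univ := by rw [← hπtplan.1, univ_map πt measurable_fst]
  have hνtuniv : νt Set.univ = πt Set.univ := univ_map πt measurable_snd
  have hmassμνt : mass μt = mass νt := by unfold mass; rw [hμtuniv, hνtuniv]
  have hμtbd : Bornology.IsBounded (msupp μt) := hμ.2.subset (msupp_mono hμtleμ)
  have hνtbd : Bornology.IsBounded (msupp νt) := hgν'.2.subset (msupp_mono hνtle)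
  have hgood1 : GoodMeasure (μt.map (φ t)) := good_map hμtfin hμtbd hφlip
  have hgood2 : GoodMeasure (νt.map (ψ t)) := good_map hνtfin hνtbd hψlip
  have hmassmap : mass (μt.map (φ t)) = mass (νt.map (ψ t)) := by
    rw [mass_map _ hφm, mass_map _ hψm]; exact hmassμνt
  have hFm : Measurable (Prod.map (φ t) (ψ t)) := hφm.prodMap hψm
  have hPplan : πt.map (Prod.map (φ t) (ψ t)) ∈ plans (μt.map (φ t)) (νt.map (ψ t)) := by
    constructor
    · rw [Measure.map_map measurable_fst hFm,
        show (Prod.fst ∘ Prod.map (φ t) (ψ t)) = (φ t) ∘ Prod.fst from rfl,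
        ← Measure.map_map hφm measurable_fst, hπtplan.1]
    · rw [Measure.map_map measurable_snd hFm,
        show (Prod.snd ∘ Prod.map (φ t) (ψ t)) = (ψ t) ∘ Prod.snd from rfl,
        ← Measure.map_map hψm measurable_snd]
  -- integrability of the distance on plans
  obtain ⟨R₁, hR₁⟩ := hgμ'.2.subset_closedBall 0
  obtain ⟨R₂, hR₂⟩ := hgν'.2.subset_closedBall 0
  have hnull1 : π (Prod.fst ⁻¹' (Metric.closedBall (0 : Euc d) R₁)ᶜ) = 0 := by
    rw [← Measure.map_apply measurable_fst measurableSet_closedBall.compl, hπ.1]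
    exact measure_mono_null (Set.compl_subset_compl.2 hR₁) (msupp_compl_null μ')
  have hnull2 : π (Prod.snd ⁻¹' (Metric.closedBall (0 : Euc d) R₂)ᶜ) = 0 := by
    rw [← Measure.map_apply measurable_snd measurableSet_closedBall.compl, hπ.2]
    exact measure_mono_null (Set.compl_subset_compl.2 hR₂) (msupp_compl_null ν')
  have h1 : ∀ᵐ q ∂π, dist q.1 0 ≤ R₁ := by
    rw [ae_iff]
    refine measure_mono_null (fun q hq => ?_) hnull1
    exact fun hb => hq (Metric.mem_closedBall.1 hb)
  have h2 : ∀ᵐ q ∂π, dist q.2 0 ≤ R₂ := by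
    rw [ae_iff]
    refine measure_mono_null (fun q hq => ?_) hnull2
    exact fun hb => hq (Metric.mem_closedBall.1 hb)
  have hdint : Integrable (fun q : Euc d × Euc d => dist q.1 q.2) π := by
    refine (integrable_const (R₁ + R₂)).mono'
      (continuous_fst.dist continuous_snd).aestronglyMeasurable ?_
    filter_upwards [h1, h2] with q hq1 hq2
    rw [Real.norm_of_nonneg dist_nonneg]
    calc dist q.1 q.2 ≤ dist q.1 0 + dist 0 q.2 := dist_triangle _ _ _
    _ ≤ R₁ + R₂ := add_le_add hq1 (by rwa [dist_comm])
  have hdintπt : Integrable (fun q : Euc d × Euc d => dist q.1 q.2) πt :=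
    hdint.mono_measure hπtle
  set c := D / (L : ℝ) * (E - 1) with hc
  have hc0 : 0 ≤ c := mul_nonneg (div_nonneg hD0 (le_of_lt hL)) (by linarith)
  have hmap_int : ∫ q, dist q.1 q.2 ∂(πt.map (Prod.map (φ t) (ψ t))) =
      ∫ q : Euc d × Euc d, dist (φ t q.1) (ψ t q.2) ∂πt := by
    rw [integral_map hFm.aemeasurable
      (continuous_fst.dist continuous_snd).aestronglyMeasurable]
    simp only [Prod.map_fst, Prod.map_snd]
  have hpt : ∀ q : Euc d × Euc d, dist (φ t q.1) (ψ t q.2) ≤ E * dist q.1 q.2 + c := by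
    intro q
    have h := flow_dist hL hvL hφ hψ ht hD q.1 q.2
    rw [hφ0, hψ0] at h
    calc dist (φ t q.1) (ψ t q.2) ≤ dist q.1 q.2 * E + D / (L : ℝ) * (E - 1) := h
    _ = E * dist q.1 q.2 + c := by rw [hc]; ring
  have hmπt : (πt Set.univ).toReal = mass μt := by unfold mass; rw [hμtuniv]
  have hIub : ∫ q : Euc d × Euc d, dist (φ t q.1) (ψ t q.2) ∂πt ≤
      E * (∫ q, dist q.1 q.2 ∂πt) + c * mass μt := by
    have hint2 : Integrable (fun q : Euc d × Euc d => E * dist q.1 q.2 + c) πt :=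
      (hdintπt.const_mul E).add (integrable_const c)
    calc ∫ q : Euc d × Euc d, dist (φ t q.1) (ψ t q.2) ∂πt
        ≤ ∫ q : Euc d × Euc d, (E * dist q.1 q.2 + c) ∂πt :=
          integral_mono_of_nonneg (Filter.Eventually.of_forall fun q => dist_nonneg) hint2
            (Filter.Eventually.of_forall hpt)
    _ = E * (∫ q, dist q.1 q.2 ∂πt) + (πt Set.univ).toReal * c := by
        rw [integral_add (hdintπt.const_mul E) (integrable_const c), integral_const,
          integral_const_mul, smul_eq_mul, measureReal_def]
    _ = E * (∫ q, dist q.1 q.2 ∂πt) + c * mass μt := by rw [hmπt]; ring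
  have hIle : ∫ q, dist q.1 q.2 ∂πt ≤ ∫ q, dist q.1 q.2 ∂π :=
    integral_mono_measure hπtle (Filter.Eventually.of_forall fun q => dist_nonneg) hdint
  -- tv bookkeeping
  have htv1 : tv (μ.map (φ t)) (μt.map (φ t)) ≤ tv μ μt := tv_map hφm hμfin
  have htv2 : tv (ν.map (ψ t)) (νt.map (ψ t)) ≤ tv ν νt := tv_map hψm hνfin
  have htv3 : tv μ μt = mass μ - mass μt := tv_of_le hμtleμ
  have htv4 : tv ν νt ≤ tv ν ν' + (mass ν' - mass νt) := tv_le_of_le hνfin hν'fin hνtle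
  have htvμ' : tv μ μ' = mass μ + mass μ' - 2 * mass μt := by unfold tv; rw [← hμt]
  -- final assembly
  have hG1 : GWass (μ.map (φ t)) (ν.map (ψ t)) ≤
      tv (μ.map (φ t)) (μt.map (φ t)) + tv (ν.map (ψ t)) (νt.map (ψ t)) +
        Wass (μt.map (φ t)) (νt.map (ψ t)) :=
    GWass_le hMfin hNfin hgood1 hgood2 hmassmap
  have hW1 : Wass (μt.map (φ t)) (νt.map (ψ t)) ≤
      ∫ q, dist q.1 q.2 ∂(πt.map (Prod.map (φ t) (ψ t))) := Wass_le_plan hPplan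
  have hmassμtle : mass μt ≤ mass μ := mass_mono hμtleμ hμfin
  have tvnn1 : 0 ≤ tv μ μ' := tv_nonneg hμfin hμ'fin
  have tvnn2 : 0 ≤ tv ν ν' := tv_nonneg hνfin hν'fin
  have e1 : E * (∫ q, dist q.1 q.2 ∂πt) ≤ E * (Wass μ' ν' + ε₁) :=
    mul_le_mul_of_nonneg_left (le_trans hIle (le_of_lt hπcost)) (le_of_lt hE0)
  have e1' : E * (Wass μ' ν' + ε₁) = E * Wass μ' ν' + E * ε₁ := by ring
  have e2 : c * mass μt ≤ c * mass μ := mul_le_mul_of_nonneg_left hmassμtle hc0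
  have e3 : E * (tv μ μ' + tv ν ν' + Wass μ' ν') ≤ E * (GWass μ ν + ε₁) :=
    mul_le_mul_of_nonneg_left (le_of_lt hlt) (le_of_lt hE0)
  have e3' : E * (tv μ μ' + tv ν ν' + Wass μ' ν') =
      E * tv μ μ' + E * tv ν ν' + E * Wass μ' ν' := by ring
  have e3'' : E * (GWass μ ν + ε₁) = E * GWass μ ν + E * ε₁ := by ring
  have e7a : tv μ μ' ≤ E * tv μ μ' := le_mul_of_one_le_left tvnn1 hE1
  have e7b : tv ν ν' ≤ E * tv ν ν' := le_mul_of_one_le_left tvnn2 hE1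
  have e5 : E * ε₁ + E * ε₁ = ε := by
    rw [hε₁]; field_simp; ring
  have e6 : c * mass μ = (E - 1) / (L : ℝ) * mass μ * D := by rw [hc]; ring
  linarith [hG1, hW1, hmap_int, hIub, e1, e1', e2, e3, e3', e3'', e7a, e7b, e5, e6, htv1,
    htv2, htv3, htv4, htvμ', hmass', hmassμνt]

end GWFE

/-- estimates for the generalized Wasserstein distance under flow actions:
(i) `W^g(φᵗ#μ, φᵗ#ν) ≤ e^{Lt} W^g(μ,ν)`;
(ii) `W^g(μ, φᵗ#μ) ≤ t ‖v‖_{C⁰} |μ|`;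
(iii) `W^g(φᵗ#μ, ψᵗ#ν) ≤ e^{Lt} W^g(μ,ν) + (e^{Lt}-1)/L ⬝ |μ| ⬝ sup_{τ∈[0,t]} ‖v_τ - w_τ‖_{C⁰}`. -/
theorem generalized_wasserstein_flow_estimates {d : ℕ}
    (v w : ℝ → Euc d → Euc d) (L : NNReal) (hL : 0 < (L : ℝ))
    (hvL : ∀ t, LipschitzWith L (v t)) (hwL : ∀ t, LipschitzWith L (w t))
    (Cv : ℝ) (hCv : ∀ t x, ‖v t x‖ ≤ Cv) (Cw : ℝ) (hCw : ∀ t x, ‖w t x‖ ≤ Cw)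
    (φ ψ : ℝ → Euc d → Euc d)
    (hφ0 : ∀ x, φ 0 x = x) (hψ0 : ∀ x, ψ 0 x = x)
    (hφ : ∀ x t, HasDerivAt (fun s => φ s x) (v t (φ t x)) t)
    (hψ : ∀ x t, HasDerivAt (fun s => ψ s x) (w t (ψ t x)) t)
    (μ ν : Measure (Euc d)) (hμ : GoodMeasure μ) (hν : GoodMeasure ν)
    (t : ℝ) (ht : 0 ≤ t) :
    GWass (μ.map (φ t)) (ν.map (φ t)) ≤ Real.exp (L * t) * GWass μ ν ∧
    GWass μ (μ.map (φ t)) ≤ t * Cv * mass μ ∧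
    (∀ D : ℝ, (∀ τ ∈ Set.Icc (0:ℝ) t, ∀ x, ‖v τ x - w τ x‖ ≤ D) →
      GWass (μ.map (φ t)) (ν.map (ψ t)) ≤
        Real.exp (L * t) * GWass μ ν + (Real.exp (L * t) - 1) / L * mass μ * D) := by
  have hφlip := GWFE.flow_lip hL hvL hφ0 hφ ht
  have hφm : Measurable (φ t) := hφlip.continuous.measurable
  refine ⟨?_, ?_, ?_⟩
  · have h := GWFE.GWass_flow_pair v v L hL hvL hvL φ φ hφ0 hφ0 hφ hφ μ ν hμ hν t ht 0
      (fun τ _ x => by simp)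
    simpa using h
  · have hμfin := hμ.1
    have hMfin : (μ.map (φ t)) Set.univ ≠ ⊤ := by rw [GWFE.univ_map μ hφm]; exact hμfin
    have hgood2 : GoodMeasure (μ.map (φ t)) := GWFE.good_map hμfin hμ.2 hφlip
    have hμF : IsFiniteMeasure μ := ⟨lt_top_iff_ne_top.2 hμfin⟩
    have hgm : Measurable (fun x : Euc d => (x, φ t x)) := measurable_id.prodMk hφm
    have hplan : μ.map (fun x => (x, φ t x)) ∈ plans μ (μ.map (φ t)) := by
      constructor
      · rw [Measure.map_map measurable_fst hgm]
        exact Measure.map_id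
      · rw [Measure.map_map measurable_snd hgm]
        rfl
    have hmass2 : mass μ = mass (μ.map (φ t)) := (GWFE.mass_map μ hφm).symm
    have hG := GWFE.GWass_le hμfin hMfin hμ hgood2 hmass2
    rw [GWFE.tv_self, GWFE.tv_self] at hG
    have hW := GWFE.Wass_le_plan hplan
    have hInt : ∫ q, dist q.1 q.2 ∂(μ.map fun x => (x, φ t x)) =
        ∫ x, dist x (φ t x) ∂μ := by
      rw [integral_map hgm.aemeasurable
        (continuous_fst.dist continuous_snd).aestronglyMeasurable]
    have hptw : ∀ x, dist x (φ t x) ≤ Cv * t := GWFE.flow_disp hCv hφ0 hφ ht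
    have hIb : ∫ x, dist x (φ t x) ∂μ ≤ mass μ * (Cv * t) := by
      have h1 : ∫ x, dist x (φ t x) ∂μ ≤ ∫ (_ : Euc d), Cv * t ∂μ :=
        integral_mono_of_nonneg (f := fun x => dist x (φ t x)) (g := fun _ => Cv * t)
          (Filter.Eventually.of_forall fun x => dist_nonneg) (integrable_const _)
          (Filter.Eventually.of_forall hptw)
      have h2 : ∫ (_ : Euc d), Cv * t ∂μ = mass μ * (Cv * t) := by
        rw [integral_const, smul_eq_mul]; rfl
      linarith
    have hring : mass μ * (Cv * t) = t * Cv * mass μ := by ring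
    linarith [hG, hW, hInt, hIb, hring]
  · intro D hD
    exact GWFE.GWass_flow_pair v w L hL hvL hwL φ ψ hφ0 hψ0 hφ hψ μ ν hμ hν t ht D hD

end
end
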